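/- arXiv:1402.1302 — 5 statements merged into one kernel-verified Lean document; each statement's English description precedes it below -/
import Mathlib

section
/- Let n ≥ 1 be an integer and L > 0 a real number. For all z, w ∈ ℂⁿ with ‖z‖ < 1 and ‖w‖ < 1, the family indexed by multi-indices α ∈ ℕⁿ with terms (Γ(L+|α|)/(α!·Γ(L))) · ∏_{j=1}^n z_j^{α_j} · (conj w_j)^{α_j} is summable, and its sum equals (1 − ∑_{j=1}^n z_j · conj w_j)^{−L} (complex power with the principal branch; note Re(1 − ∑ z_j conj w_j) > 0). -/
/-!
Grouping the multi-indices by `|α| = k`, the multinomial theorem in the form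
`∑_{|α| = k} xᵅ / α! = (∑ⱼ xⱼ)ᵏ / k!` collapses each group to the `k`-th term
`Γ(L+k) / (k! Γ(L)) uᵏ` of the one-variable binomial series of `(1 - u)^{-L}`,
where `u = ∑ⱼ zⱼ conj wⱼ`. The same computation with `|zⱼ| |wⱼ|` in place of
`zⱼ conj wⱼ` gives absolute convergence, because `∑ⱼ |zⱼ| |wⱼ| ≤ ‖z‖ ‖w‖ < 1`
by Cauchy–Schwarz.
-/

open Finset
open scoped Nat

theorem Complex.choose_add_sub_one_eq_Gamma {z : ℂ} (hz : ∀ k : ℕ, z ≠ -k) (n : ℕ) :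
    Ring.choose (z + n - 1) n = Complex.Gamma (z + n) / (n ! * Complex.Gamma z) := by
  have hfact : (n ! : ℂ) ≠ 0 := by exact_mod_cast n.factorial_ne_zero
  have hpoch : (n ! : ℂ) * Ring.multichoose z n = (ascPochhammer ℂ n).eval z := by
    rw [← nsmul_eq_mul, Ring.factorial_nsmul_multichoose_eq_ascPochhammer,
      Polynomial.ascPochhammer_smeval_cast, Polynomial.ascPochhammer_smeval_eq_eval]
  rw [← Ring.multichoose_eq, div_mul_eq_div_div_swap, Complex.Gamma_add_nat_div_Gamma_eq z hz,
    ← hpoch, mul_div_cancel_left₀ _ hfact]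

theorem Complex.hasSum_Gamma_div_mul_pow {a : ℂ} (ha : ∀ k : ℕ, a ≠ -k) {u : ℂ}
    (hu : ‖u‖ < 1) :
    HasSum (fun k : ℕ => Complex.Gamma (a + k) / (k ! * Complex.Gamma a) * u ^ k)
      ((1 - u) ^ (-a)) := by
  have hu' : u ∈ Metric.eball (0 : ℂ) 1 := by
    rw [Metric.mem_eball, edist_zero_right, enorm_eq_nnnorm]
    exact_mod_cast hu
  have := (Complex.one_div_one_sub_cpow_hasFPowerSeriesOnBall_zero a).hasSum hu'
  simpa [FormalMultilinearSeries.ofScalars_apply_eq, Complex.choose_add_sub_one_eq_Gamma ha,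
    Complex.cpow_neg, mul_comm] using this

theorem Complex.hasSum_Gamma_div_mul_pow_of_pos {L : ℝ} (hL : 0 < L) {u : ℂ}
    (hu : ‖u‖ < 1) :
    HasSum (fun k : ℕ => ((Real.Gamma (L + k) / (k ! * Real.Gamma L) : ℝ) : ℂ) * u ^ k)
      ((1 - u) ^ (-(L : ℂ))) := by
  have hL' (k : ℕ) : (L : ℂ) ≠ -k := fun h => by
    have := congrArg Complex.re h
    simp only [Complex.ofReal_re, Complex.neg_re, Complex.natCast_re] at this
    linarith [k.cast_nonneg (α := ℝ)]
  convert Complex.hasSum_Gamma_div_mul_pow hL' hu using 3 with k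
  push_cast [← Complex.Gamma_ofReal]
  rfl

theorem Finset.sum_piAntidiag_prod_pow_div_prod_factorial {ι K : Type*} [DecidableEq ι]
    [Field K] [CharZero K] (s : Finset ι) (f : ι → K) (n : ℕ) :
    ∑ k ∈ piAntidiag s n, (∏ i ∈ s, f i ^ k i) / ∏ i ∈ s, ((k i)! : K) =
      (∑ i ∈ s, f i) ^ n / n ! := by
  rw [sum_pow_eq_sum_piAntidiag, sum_div]
  refine sum_congr rfl fun k hk => ?_
  have hspec := Nat.multinomial_spec s k
  rw [(mem_piAntidiag.mp hk).1] at hspec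
  have hprod : (∏ i ∈ s, ((k i)! : K)) ≠ 0 := prod_ne_zero_iff.mpr fun i _ => by
    exact_mod_cast (k i).factorial_ne_zero
  have hn : (n ! : K) ≠ 0 := by exact_mod_cast n.factorial_ne_zero
  rw [div_eq_div_iff hprod hn, ← hspec]
  push_cast
  ring

theorem sum_piAntidiag_Gamma_div_mul_prod_pow {ι K : Type*} [Fintype ι] [DecidableEq ι]
    [RCLike K] (L : ℝ) (y : ι → K) (k : ℕ) :
    ∑ α ∈ piAntidiag univ k,
        ((Real.Gamma (L + (∑ j, α j : ℕ)) / ((∏ j, (α j)! : ℕ) * Real.Gamma L) : ℝ) : K) *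
          ∏ j, y j ^ α j =
      ((Real.Gamma (L + k) / (k ! * Real.Gamma L) : ℝ) : K) * (∑ j, y j) ^ k := by
  have hterm : ∀ α ∈ piAntidiag univ k,
      ((Real.Gamma (L + (∑ j, α j : ℕ)) / ((∏ j, (α j)! : ℕ) * Real.Gamma L) : ℝ) : K) *
          ∏ j, y j ^ α j =
        ((Real.Gamma (L + k) / Real.Gamma L : ℝ) : K) *
          ((∏ j, y j ^ α j) / ∏ j, ((α j)! : K)) := by
    intro α hα
    rw [(mem_piAntidiag.mp hα).1, div_mul_eq_div_div_swap]
    push_cast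
    ring
  rw [sum_congr rfl hterm, ← mul_sum, sum_piAntidiag_prod_pow_div_prod_factorial,
    div_mul_eq_div_div_swap]
  push_cast
  ring

theorem EuclideanSpace.sum_norm_mul_norm_le {𝕜 ι : Type*} [RCLike 𝕜] [Fintype ι]
    (z w : EuclideanSpace 𝕜 ι) : ∑ j, ‖z j‖ * ‖w j‖ ≤ ‖z‖ * ‖w‖ := by
  rw [EuclideanSpace.norm_eq, EuclideanSpace.norm_eq]
  exact Real.sum_mul_le_sqrt_mul_sqrt _ _ _

theorem Finset.hasSum_subtype_of_mem_iff {β F : Type*} [AddCommMonoid F]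
    [TopologicalSpace F] (s : Finset β) {q : β → Prop} (hs : ∀ x, x ∈ s ↔ q x) (g : β → F) :
    HasSum (fun x : Subtype q => g x) (∑ x ∈ s, g x) :=
  (Equiv.subtypeEquivRight hs).hasSum_iff.mp (s.hasSum g)

theorem HasSum.of_sum_finset_fibers {β γ E : Type*} [NormedAddCommGroup E]
    [CompleteSpace E] {f : β → E} {a : E} (p : β → γ) (s : γ → Finset β)
    (hs : ∀ x k, x ∈ s k ↔ p x = k) (hnorm : Summable fun k => ∑ x ∈ s k, ‖f x‖)
    (hf : HasSum (fun k => ∑ x ∈ s k, f x) a) :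
    HasSum f a := by
  have hnorm_fiber (k : γ) := (s k).hasSum_subtype_of_mem_iff (hs · k) (‖f ·‖)
  rw [← (Equiv.sigmaFiberEquiv p).hasSum_iff]
  refine hf.sigma_of_hasSum (fun k => (s k).hasSum_subtype_of_mem_iff (hs · k) f)
    (Summable.of_norm ?_)
  rw [summable_sigma_of_nonneg fun _ => norm_nonneg _]
  refine ⟨fun k => (hnorm_fiber k).summable, ?_⟩
  convert hnorm using 2 with k
  exact (hnorm_fiber k).tsum_eq

theorem hasSum_Gamma_div_mul_prod_pow {ι : Type*} [Fintype ι] [DecidableEq ι] {L : ℝ}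
    (hL : 0 < L) {y : ι → ℂ} (hy : ∑ j, ‖y j‖ < 1) :
    HasSum
      (fun α : ι → ℕ =>
        ((Real.Gamma (L + (∑ j, α j : ℕ)) / ((∏ j, (α j)! : ℕ) * Real.Gamma L) : ℝ) : ℂ) *
          ∏ j, y j ^ α j)
      ((1 - ∑ j, y j) ^ (-(L : ℂ))) := by
  have hnorm (α : ι → ℕ) :
      ‖((Real.Gamma (L + (∑ j, α j : ℕ)) / ((∏ j, (α j)! : ℕ) * Real.Gamma L) : ℝ) : ℂ) *
          ∏ j, y j ^ α j‖ =
        (Real.Gamma (L + (∑ j, α j : ℕ)) / ((∏ j, (α j)! : ℕ) * Real.Gamma L)) *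
          ∏ j, ‖y j‖ ^ α j := by
    have := Real.Gamma_pos_of_pos hL
    have := Real.Gamma_pos_of_pos (by positivity : 0 < L + (∑ j, α j : ℕ))
    rw [norm_mul, Complex.norm_real, Real.norm_of_nonneg (by positivity), norm_prod]
    simp only [norm_pow]
  refine HasSum.of_sum_finset_fibers (fun α => ∑ j, α j) (piAntidiag univ)
    (by simp [mem_piAntidiag]) ?_ ?_
  -- The `RCLike` coercions of `sum_piAntidiag_Gamma_div_mul_prod_pow` are `id` on `ℝ` and
  -- `Complex.ofReal` on `ℂ` only up to defeq, hence `exact` and `▸` rather than `simp`.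
  · have hfiber (k : ℕ) :
        ∑ α ∈ piAntidiag univ k,
          (Real.Gamma (L + (∑ j, α j : ℕ)) / ((∏ j, (α j)! : ℕ) * Real.Gamma L)) *
            ∏ j, ‖y j‖ ^ α j =
          Real.Gamma (L + k) / (k ! * Real.Gamma L) * (∑ j, ‖y j‖) ^ k :=
      sum_piAntidiag_Gamma_div_mul_prod_pow (K := ℝ) L (‖y ·‖) k
    have hρ : ‖((∑ j, ‖y j‖ : ℝ) : ℂ)‖ < 1 := by
      rwa [Complex.norm_real, Real.norm_of_nonneg (sum_nonneg fun j _ => norm_nonneg _)]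
    simp only [hnorm, hfiber]
    exact_mod_cast (Complex.hasSum_Gamma_div_mul_pow_of_pos hL hρ).summable
  · exact (funext fun k => sum_piAntidiag_Gamma_div_mul_prod_pow L y k) ▸
      Complex.hasSum_Gamma_div_mul_pow_of_pos hL ((norm_sum_le _ _).trans_lt hy)

theorem covariance_kernel_hasSum_general
    (n : ℕ) (L : ℝ) (hL : 0 < L)
    (z w : EuclideanSpace ℂ (Fin n)) (hz : ‖z‖ < 1) (hw : ‖w‖ < 1) :
    HasSum
      (fun α : Fin n → ℕ =>
        ((Real.Gamma (L + (∑ j, α j : ℕ)) /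
            ((∏ j, Nat.factorial (α j) : ℕ) * Real.Gamma L) : ℝ) : ℂ) *
          ∏ j, (z j ^ α j * (starRingEnd ℂ) (w j) ^ α j))
      ((1 - ∑ j, z j * (starRingEnd ℂ) (w j)) ^ (-(L : ℂ))) := by
  have hzw : ∑ j, ‖z j * (starRingEnd ℂ) (w j)‖ < 1 := calc
    ∑ j, ‖z j * (starRingEnd ℂ) (w j)‖ = ∑ j, ‖z j‖ * ‖w j‖ := by simp
    _ ≤ ‖z‖ * ‖w‖ := EuclideanSpace.sum_norm_mul_norm_le z w
    _ < 1 := by nlinarith [norm_nonneg z, norm_nonneg w]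
  simpa only [mul_pow] using hasSum_Gamma_div_mul_prod_pow hL hzw

/-- The covariance kernel of the hyperbolic GAF in the unit ball of ℂⁿ:
for `‖z‖ < 1`, `‖w‖ < 1`, the family
`(Γ(L+|α|)/(α! Γ(L))) zᵅ (conj w)ᵅ` indexed by multi-indices `α ∈ ℕⁿ`
is summable with sum `(1 - z ⬝ conj w)^{-L}` (principal branch). -/
theorem covariance_kernel_hasSum
    (n : ℕ) (hn : 1 ≤ n) (L : ℝ) (hL : 0 < L)
    (z w : EuclideanSpace ℂ (Fin n)) (hz : ‖z‖ < 1) (hw : ‖w‖ < 1) :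
    HasSum
      (fun α : Fin n → ℕ =>
        ((Real.Gamma (L + (∑ j, α j : ℕ)) /
            ((∏ j, Nat.factorial (α j) : ℕ) * Real.Gamma L) : ℝ) : ℂ) *
          ∏ j, (z j ^ α j * (starRingEnd ℂ) (w j) ^ α j))
      ((1 - ∑ j, z j * (starRingEnd ℂ) (w j)) ^ (-(L : ℂ))) :=
  covariance_kernel_hasSum_general n L hL z w hz hw
end

section
/- Let n ≥ 2 be an integer, L > 0 real and 0 < r < 1. Then r^{4n} (1−r²)^{2L−2} · ∫_𝔻 (1−|w|²)^{n−2} |1−w|² / ((|1−r²w|^{2L} − (1−r²)^{2L}) · |1−r²w|²) dA(w) = 2 (1−r²)^{n−2} · K(L,r), where the left-hand integral is over the open unit disk 𝔻 ⊂ ℂ with respect to planar Lebesgue measure dA. -/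
/-!
Substituting `u = 1 - r²w` maps the unit disk onto the disk `|u - 1| < r²`, and in the polar
coordinates `u = ρ e^{iθ}`, `ρ = (1 - r²)/s`, every factor of the integrand becomes elementary:
`1 - r²w = u`, `1 - |w|² = ρ (2 cos θ - 2c)/r⁴` and
`|1 - w|² = ρ (1 - r²)(s + 1/s - 2 cos θ)/r⁴`, where `c = ((1 + r²)s + (1 - r²)/s)/2`.
The disk condition becomes `c < cos θ`, i.e. `|θ| < α(s,r)`, and forces
`s ∈ ((1 - r²)/(1 + r²), 1)`; the angular integrand is even, whence the factor `2`.
All changes of variables are done on lower Lebesgue integrals of nonnegative functions, so no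
integrability has to be established.
-/

open scoped Real

/-- `α(s,r) = arccos(((1+r²)s + (1-r²)/s)/2)`. -/
noncomputable def alphaAngle (r s : ℝ) : ℝ :=
  Real.arccos (((1 + r ^ 2) * s + (1 - r ^ 2) / s) / 2)

/-- The double integral `K(L,r)` of Lemma 3.1. -/
noncomputable def K (n : ℕ) (L r : ℝ) : ℝ :=
  ∫ s in ((1 - r ^ 2) / (1 + r ^ 2))..1,
    s ^ (2 * L - n) / (1 - s ^ (2 * L)) *
      ∫ θ in (0 : ℝ)..alphaAngle r s,
        (2 * Real.cos θ - 2 * Real.cos (alphaAngle r s)) ^ (n - 2) *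
          (s + 1 / s - 2 * Real.cos θ)

open MeasureTheory Set Real
open scoped ENNReal

namespace MeasureTheory.Measure

variable {E : Type*} [NormedAddCommGroup E] [NormedSpace ℝ E] [MeasurableSpace E] [BorelSpace E]
  [FiniteDimensional ℝ E] (μ : Measure E) [μ.IsAddHaarMeasure]

theorem lintegral_comp_smul (f : E → ℝ≥0∞) {R : ℝ} (hR : R ≠ 0) :
    ∫⁻ x, f (R • x) ∂μ =
      ENNReal.ofReal |(R ^ Module.finrank ℝ E)⁻¹| * ∫⁻ x, f x ∂μ := by
  rw [← (measurableEmbedding_const_smul₀ hR).lintegral_map, map_addHaar_smul μ hR,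
    lintegral_smul_measure, smul_eq_mul]

end MeasureTheory.Measure

theorem lintegral_comp_const_div_Ioi {a : ℝ} (ha : 0 < a) (g : ℝ → ℝ≥0∞) :
    ∫⁻ s in Ioi 0, ENNReal.ofReal (a / s ^ 2) * g (a / s) = ∫⁻ ρ in Ioi 0, g ρ := by
  have himage : (a / ·) '' Ioi (0 : ℝ) = Ioi 0 := by
    ext ρ
    refine ⟨?_, fun hρ => ⟨a / ρ, div_pos ha hρ, div_div_cancel₀ ha.ne'⟩⟩
    rintro ⟨s, hs, rfl⟩
    exact div_pos ha hs
  have hderiv : ∀ s ∈ Ioi (0 : ℝ), HasDerivWithinAt (a / ·) (-(a / s ^ 2)) (Ioi 0) s := by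
    intro s hs
    rw [show -(a / s ^ 2) = a * -(s ^ 2)⁻¹ by ring]
    exact ((hasDerivAt_inv (ne_of_gt hs)).const_mul a).hasDerivWithinAt
  have hinj : InjOn (a / ·) (Ioi (0 : ℝ)) := fun s hs t ht h => by
    rw [div_eq_div_iff (ne_of_gt hs) (ne_of_gt ht)] at h
    exact (mul_left_cancel₀ ha.ne' h).symm
  conv_rhs =>
    rw [← himage, lintegral_image_eq_lintegral_abs_deriv_mul measurableSet_Ioi hderiv hinj]
  refine setLIntegral_congr_fun measurableSet_Ioi fun s (hs : 0 < s) => ?_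
  rw [abs_neg, abs_of_pos (by positivity)]

namespace Complex

theorem lintegral_comp_sub_div (g : ℂ → ℝ≥0∞) (z : ℂ) {c : ℝ} (hc : c ≠ 0) :
    ∫⁻ u, g ((z - u) / c) = ENNReal.ofReal (c ^ 2) * ∫⁻ w, g w := by
  have hscale := Measure.lintegral_comp_smul volume g (inv_ne_zero hc)
  simp only [finrank_real_complex, inv_pow, inv_inv, abs_pow, sq_abs] at hscale
  rw [← hscale, ← lintegral_sub_left_eq_self _ z]
  simp [div_eq_inv_mul]

theorem lintegral_eq_lintegral_Ioi_Ioo {g : ℂ → ℝ≥0∞} (hg : Measurable g) :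
    ∫⁻ w, g w = ∫⁻ ρ in Ioi 0, ∫⁻ θ in Ioo (-π) π,
      ENNReal.ofReal ρ * g (Complex.polarCoord.symm (ρ, θ)) := by
  rw [← Complex.lintegral_comp_polarCoord_symm, polarCoord_target,
    Measure.volume_eq_prod, ← Measure.prod_restrict, lintegral_prod]
  · rfl
  · have : Measurable fun p : ℝ × ℝ => Complex.polarCoord.symm p := by
      simp only [Complex.polarCoord_symm_apply]; fun_prop
    exact ((measurable_fst.ennreal_ofReal).smul (hg.comp this)).aemeasurable

theorem norm_polarCoord_symm_sub_ofReal_sq (p : ℝ × ℝ) (x : ℝ) :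
    ‖Complex.polarCoord.symm p - x‖ ^ 2 = p.1 ^ 2 - 2 * p.1 * x * Real.cos p.2 + x ^ 2 := by
  rw [← normSq_eq_norm_sq, Complex.polarCoord_symm_apply, normSq_apply]
  simp only [sub_re, sub_im, mul_re, mul_im, add_re, add_im, ofReal_re, ofReal_im, I_re, I_im]
  linear_combination p.1 ^ 2 * Real.sin_sq_add_cos_sq p.2

theorem lintegral_eq_lintegral_inv_polarCoord {g : ℂ → ℝ≥0∞} (hg : Measurable g) (z : ℂ)
    {a c : ℝ} (ha : 0 < a) (hc : c ≠ 0) :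
    ∫⁻ w, g w = ∫⁻ s in Ioi 0, ∫⁻ θ in Ioo (-π) π,
      ENNReal.ofReal (a ^ 2 / (c ^ 2 * s ^ 3)) *
        g ((z - Complex.polarCoord.symm (a / s, θ)) / c) := by
  have hc2 : 0 < c ^ 2 := by positivity
  have hscale : ∫⁻ w, g w = ∫⁻ u, ENNReal.ofReal (c ^ 2)⁻¹ * g ((z - u) / c) := by
    rw [lintegral_const_mul' _ _ ENNReal.ofReal_ne_top, lintegral_comp_sub_div g z hc,
      ← mul_assoc, ← ENNReal.ofReal_mul (inv_nonneg.2 hc2.le), inv_mul_cancel₀ hc2.ne',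
      ENNReal.ofReal_one, one_mul]
  rw [hscale, lintegral_eq_lintegral_Ioi_Ioo (by fun_prop),
    ← lintegral_comp_const_div_Ioi ha]
  refine setLIntegral_congr_fun measurableSet_Ioi fun s (hs : 0 < s) => ?_
  rw [← lintegral_const_mul' _ _ ENNReal.ofReal_ne_top]
  refine lintegral_congr fun θ => ?_
  rw [← mul_assoc, ← mul_assoc, ← ENNReal.ofReal_mul (by positivity),
    ← ENNReal.ofReal_mul (by positivity)]
  congr 2
  field_simp

end Complex

theorem Real.setOf_lt_cos_inter_Ioo (c : ℝ) :
    {θ | c < cos θ} ∩ Ioo (-π) π = Ioo (-arccos c) (arccos c) := by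
  have key : ∀ x ∈ Ico 0 π, c < cos x ↔ x < arccos c := by
    rintro x ⟨hx0, hxπ⟩
    rcases lt_or_ge c (-1) with hc | hc
    · simp only [arccos_eq_pi.2 hc.le, hxπ, iff_true]
      linarith [neg_one_le_cos x]
    rcases le_or_gt c 1 with hc' | hc'
    · conv_lhs => rw [← cos_arccos hc hc']
      exact strictAntiOn_cos.lt_iff_gt ⟨arccos_nonneg c, arccos_le_pi c⟩ ⟨hx0, hxπ.le⟩
    · simp only [arccos_eq_zero.2 hc'.le, not_lt.2 hx0, iff_false, not_lt]
      linarith [cos_le_one x]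
  ext θ
  simp only [mem_inter_iff, mem_ofPred_eq, mem_Ioo]
  rw [← cos_abs θ, ← abs_lt, ← abs_lt]
  constructor
  · rintro ⟨h, hπ⟩
    exact (key |θ| ⟨abs_nonneg θ, hπ⟩).1 h
  · intro h
    have hπ : |θ| < π := h.trans_le (arccos_le_pi c)
    exact ⟨(key |θ| ⟨abs_nonneg θ, hπ⟩).2 h, hπ⟩

theorem measurable_parametric_intervalIntegral {X : Type*} [MeasurableSpace X]
    {f : X → ℝ → ℝ} (hf : Measurable (Function.uncurry f)) {a b : X → ℝ} (ha : Measurable a)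
    (hb : Measurable b) :
    Measurable fun x => ∫ t in a x..b x, f x t := by
  have hIoc : ∀ {a b : X → ℝ}, Measurable a → Measurable b →
      Measurable fun x => ∫ t in Ioc (a x) (b x), f x t := by
    intro a b ha hb
    have hS : MeasurableSet {p : X × ℝ | p.2 ∈ Ioc (a p.1) (b p.1)} :=
      (measurableSet_lt (ha.comp measurable_fst) measurable_snd).inter
        (measurableSet_le measurable_snd (hb.comp measurable_fst))
    have hind : Measurable (Function.uncurry fun x => (Ioc (a x) (b x)).indicator (f x)) := by
      convert hf.indicator hS using 1
      ext ⟨x, t⟩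
      simp [Set.indicator_apply]
    simpa only [integral_indicator measurableSet_Ioc] using
      (hind.stronglyMeasurable.integral_prod_right (ν := volume)).measurable
  exact (hIoc ha hb).sub (hIoc hb ha)

theorem intervalIntegral.integral_symm_eq_two_smul_of_even {E : Type*} [NormedAddCommGroup E]
    [NormedSpace ℝ E] {f : ℝ → E} (heven : ∀ x, f (-x) = f x) {a : ℝ}
    (hf : IntervalIntegrable f volume 0 a) :
    ∫ x in -a..a, f x = 2 • ∫ x in 0..a, f x := by
  have hneg : IntervalIntegrable f volume (-a) 0 := by
    simpa [heven] using ((IntervalIntegrable.iff_comp_neg (a := 0) (b := a)).mp hf).symm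
  have hsymm : ∫ x in -a..0, f x = ∫ x in 0..a, f x := by
    simpa [heven] using (integral_comp_neg (a := 0) (b := a) f).symm
  rw [← integral_add_adjacent_intervals hneg hf, hsymm, two_smul]

noncomputable def alphaCos (r s : ℝ) : ℝ := ((1 + r ^ 2) * s + (1 - r ^ 2) / s) / 2

theorem alphaAngle_eq_arccos_alphaCos (r s : ℝ) : alphaAngle r s = arccos (alphaCos r s) := rfl

section

variable {r s : ℝ}

theorem alphaCos_pos (hr : r ^ 2 < 1) (hs : 0 < s) : 0 < alphaCos r s := by
  have : 0 < 1 - r ^ 2 := by linarith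
  unfold alphaCos; positivity

theorem alphaCos_lt_one_iff (hs : 0 < s) :
    alphaCos r s < 1 ↔ s ∈ Ioo ((1 - r ^ 2) / (1 + r ^ 2)) 1 := by
  have hfactor : 2 * s * (1 - alphaCos r s) = ((1 + r ^ 2) * s - (1 - r ^ 2)) * (1 - s) := by
    unfold alphaCos; field_simp; ring
  have hb : 0 < 1 + r ^ 2 := by positivity
  rw [mem_Ioo, div_lt_iff₀ hb, ← sub_pos,
    ← mul_pos_iff_of_pos_left (by positivity : 0 < 2 * s), hfactor, mul_pos_iff]
  constructor
  · rintro (⟨h1, h2⟩ | ⟨h1, h2⟩)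
    · constructor <;> linarith
    · nlinarith
  · rintro ⟨h1, h2⟩
    left; constructor <;> linarith

theorem cos_alphaAngle (hr : r ^ 2 < 1) (hs : 0 < s) (h : alphaCos r s ≤ 1) :
    cos (alphaAngle r s) = alphaCos r s :=
  cos_arccos (neg_one_lt_zero.trans (alphaCos_pos hr hs)).le h

end

noncomputable def diskPoint (r s θ : ℝ) : ℂ :=
  (1 - Complex.polarCoord.symm ((1 - r ^ 2) / s, θ)) / (r ^ 2 : ℝ)

section

variable {r s : ℝ} (θ : ℝ)

theorem one_sub_mul_diskPoint (hr : r ≠ 0) :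
    1 - (r : ℂ) ^ 2 * diskPoint r s θ = Complex.polarCoord.symm ((1 - r ^ 2) / s, θ) := by
  have : (r : ℂ) ^ 2 ≠ 0 := by exact_mod_cast pow_ne_zero 2 hr
  rw [diskPoint, Complex.ofReal_pow, mul_div_cancel₀ _ this, sub_sub_cancel]

theorem one_sub_norm_diskPoint_sq (hr : r ≠ 0) (hs : 0 < s) :
    1 - ‖diskPoint r s θ‖ ^ 2 = (1 - r ^ 2) / s * (2 * cos θ - 2 * alphaCos r s) / r ^ 4 := by
  have hr2 : 0 < r ^ 2 := by positivity
  rw [diskPoint, norm_div, Complex.norm_real, Real.norm_of_nonneg hr2.le, div_pow, norm_sub_rev,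
    ← Complex.ofReal_one, Complex.norm_polarCoord_symm_sub_ofReal_sq, alphaCos]
  field_simp
  ring

theorem norm_one_sub_diskPoint_sq (hr : r ≠ 0) (hs : 0 < s) :
    ‖1 - diskPoint r s θ‖ ^ 2 =
      (1 - r ^ 2) / s * (1 - r ^ 2) * (s + 1 / s - 2 * cos θ) / r ^ 4 := by
  have hr2 : 0 < r ^ 2 := by positivity
  have hsub : 1 - diskPoint r s θ =
      (Complex.polarCoord.symm ((1 - r ^ 2) / s, θ) - ((1 - r ^ 2 : ℝ) : ℂ)) /
        (r ^ 2 : ℝ) := by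
    have : ((r ^ 2 : ℝ) : ℂ) ≠ 0 := by exact_mod_cast hr2.ne'
    unfold diskPoint; field_simp; push_cast; ring
  rw [hsub, norm_div, Complex.norm_real, Real.norm_of_nonneg hr2.le, div_pow,
    Complex.norm_polarCoord_symm_sub_ofReal_sq]
  field_simp
  ring

theorem norm_one_sub_mul_diskPoint (hr0 : 0 < r) (hr1 : r < 1) (hs : 0 < s) :
    ‖1 - (r : ℂ) ^ 2 * diskPoint r s θ‖ = (1 - r ^ 2) / s := by
  have : 0 < 1 - r ^ 2 := by nlinarith
  rw [one_sub_mul_diskPoint θ hr0.ne', Complex.norm_polarCoord_symm, abs_of_pos (by positivity)]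

theorem norm_diskPoint_lt_one_iff (hr0 : 0 < r) (hr1 : r < 1) (hs : 0 < s) :
    ‖diskPoint r s θ‖ < 1 ↔ alphaCos r s < cos θ := by
  have : 0 < 1 - r ^ 2 := by nlinarith
  rw [← sq_lt_one_iff₀ (norm_nonneg _), ← sub_pos, one_sub_norm_diskPoint_sq θ hr0.ne' hs]
  constructor
  · intro h
    have := pos_of_mul_pos_right ((div_pos_iff_of_pos_right (by positivity)).1 h) (by positivity)
    linarith
  · intro h
    have : 0 < 2 * cos θ - 2 * alphaCos r s := by linarith
    positivity

end

noncomputable def diskIntegrand (n : ℕ) (L r : ℝ) (w : ℂ) : ℝ :=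
  (1 - ‖w‖ ^ 2) ^ (n - 2) * ‖1 - w‖ ^ 2 /
    ((‖1 - (r : ℂ) ^ 2 * w‖ ^ (2 * L) - (1 - r ^ 2) ^ (2 * L)) *
      ‖1 - (r : ℂ) ^ 2 * w‖ ^ 2)

theorem diskIntegrand_diskPoint {n : ℕ} {L r s : ℝ} (hn : 2 ≤ n) (hL : 0 < L) (hr0 : 0 < r)
    (hr1 : r < 1) (hs : s ∈ Ioo 0 1) (θ : ℝ) :
    (1 - r ^ 2) ^ 2 / ((r ^ 2) ^ 2 * s ^ 3) * diskIntegrand n L r (diskPoint r s θ) =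
      (1 - r ^ 2) ^ ((n : ℝ) - 2 * L) / r ^ (4 * n) *
        (s ^ (2 * L - n) / (1 - s ^ (2 * L)) *
          ((2 * cos θ - 2 * alphaCos r s) ^ (n - 2) * (s + 1 / s - 2 * cos θ))) := by
  obtain ⟨hs0, hs1⟩ := hs
  have ha : 0 < 1 - r ^ 2 := by nlinarith
  have hsL : s ^ (2 * L) < 1 := rpow_lt_one hs0.le hs1 (by positivity)
  have haL : 0 < (1 - r ^ 2) ^ (2 * L) := rpow_pos_of_pos ha _
  have hsL0 : 0 < s ^ (2 * L) := rpow_pos_of_pos hs0 _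
  rw [diskIntegrand, norm_one_sub_mul_diskPoint θ hr0 hr1 hs0,
    norm_one_sub_diskPoint_sq θ hr0.ne' hs0, one_sub_norm_diskPoint_sq θ hr0.ne' hs0,
    div_rpow ha.le hs0.le, rpow_sub ha, rpow_sub hs0, rpow_natCast, rpow_natCast]
  obtain ⟨m, rfl⟩ : ∃ m, n = m + 2 := ⟨n - 2, by omega⟩
  rw [Nat.add_sub_cancel]
  generalize 2 * cos θ - 2 * alphaCos r s = X
  generalize s + 1 / s - 2 * cos θ = Y
  generalize (1 - r ^ 2) ^ (2 * L) = A at *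
  generalize s ^ (2 * L) = S at *
  have h1S : 1 - S ≠ 0 := by linarith
  simp only [div_pow, mul_pow]
  field_simp
  ring

noncomputable def angularIntegrand (n : ℕ) (r s θ : ℝ) : ℝ :=
  (2 * cos θ - 2 * cos (alphaAngle r s)) ^ (n - 2) * (s + 1 / s - 2 * cos θ)

noncomputable def radialIntegrand (n : ℕ) (L r s : ℝ) : ℝ :=
  s ^ (2 * L - n) / (1 - s ^ (2 * L)) *
    ∫ θ in (0 : ℝ)..alphaAngle r s, angularIntegrand n r s θ

theorem K_eq_intervalIntegral_radialIntegrand (n : ℕ) (L r : ℝ) :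
    K n L r = ∫ s in ((1 - r ^ 2) / (1 + r ^ 2))..1, radialIntegrand n L r s := rfl

section

variable {n : ℕ} {L r s : ℝ}

theorem angularIntegrand_neg (θ : ℝ) :
    angularIntegrand n r s (-θ) = angularIntegrand n r s θ := by
  simp only [angularIntegrand, cos_neg]

theorem continuous_angularIntegrand : Continuous (angularIntegrand n r s) := by
  unfold angularIntegrand; fun_prop

theorem angularIntegrand_nonneg (hs : 0 < s) {θ : ℝ} (hθ : |θ| ≤ alphaAngle r s) :
    0 ≤ angularIntegrand n r s θ := by
  have hcos : cos (alphaAngle r s) ≤ cos θ := by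
    rw [← cos_abs θ]
    exact cos_le_cos_of_nonneg_of_le_pi (abs_nonneg θ) (arccos_le_pi _) hθ
  have hsum : s + 1 / s - 2 * cos θ = (s - 1) ^ 2 / s + 2 * (1 - cos θ) := by
    field_simp; ring
  have := cos_le_one θ
  unfold angularIntegrand
  rw [hsum]
  exact mul_nonneg (pow_nonneg (by linarith) _) (by positivity)

theorem radialIntegrand_nonneg (hL : 0 < L) (hs : s ∈ Ioo 0 1) :
    0 ≤ radialIntegrand n L r s := by
  have hsL : s ^ (2 * L) < 1 := rpow_lt_one hs.1.le hs.2 (by positivity)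
  refine mul_nonneg (div_nonneg (rpow_nonneg hs.1.le _) (by linarith)) ?_
  refine intervalIntegral.integral_nonneg (arccos_nonneg _) fun θ hθ => ?_
  exact angularIntegrand_nonneg hs.1 ((abs_of_nonneg hθ.1).trans_le hθ.2)

theorem measurable_radialIntegrand : Measurable (radialIntegrand n L r) := by
  unfold radialIntegrand
  refine (by fun_prop : Measurable fun s : ℝ => s ^ (2 * L - n) / (1 - s ^ (2 * L))).mul
    (measurable_parametric_intervalIntegral ?_ measurable_const ?_)
  · unfold angularIntegrand alphaAngle; fun_prop
  · unfold alphaAngle; fun_prop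

theorem lintegral_indicator_angularIntegrand (hs : 0 < s) {c : ℝ} (hc : 0 ≤ c) :
    ∫⁻ θ in Ioo (-π) π, {θ | alphaCos r s < cos θ}.indicator
        (fun θ => ENNReal.ofReal (c * angularIntegrand n r s θ)) θ =
      ENNReal.ofReal (2 * c * ∫ θ in (0 : ℝ)..alphaAngle r s, angularIntegrand n r s θ) := by
  have hα : 0 ≤ alphaAngle r s := arccos_nonneg _
  have hcont : Continuous fun θ => c * angularIntegrand n r s θ :=
    continuous_const.mul continuous_angularIntegrand
  rw [lintegral_indicator (measurableSet_lt measurable_const continuous_cos.measurable),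
    Measure.restrict_restrict (measurableSet_lt measurable_const continuous_cos.measurable),
    Real.setOf_lt_cos_inter_Ioo, ← alphaAngle_eq_arccos_alphaCos,
    ← ofReal_integral_eq_lintegral_ofReal (hcont.integrableOn_Icc.mono_set Ioo_subset_Icc_self)]
  · rw [← integral_Ioc_eq_integral_Ioo, ← intervalIntegral.integral_of_le (by linarith),
      intervalIntegral.integral_symm_eq_two_smul_of_even (fun θ => by rw [angularIntegrand_neg])
        (hcont.intervalIntegrable _ _), intervalIntegral.integral_const_mul, nsmul_eq_mul]
    congr 1
    push_cast; ring
  · refine (ae_restrict_iff' measurableSet_Ioo).2 (Filter.Eventually.of_forall fun θ hθ => ?_)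
    exact mul_nonneg hc (angularIntegrand_nonneg hs (abs_le.2 ⟨hθ.1.le, hθ.2.le⟩))

end

section

variable {n : ℕ} {L r : ℝ}

theorem measurable_diskIntegrand : Measurable (diskIntegrand n L r) := by
  unfold diskIntegrand; fun_prop

theorem diskIntegrand_nonneg (hL : 0 < L) (hr0 : 0 < r) (hr1 : r < 1) {w : ℂ} (hw : ‖w‖ < 1) :
    0 ≤ diskIntegrand n L r w := by
  have hr2 : 0 < r ^ 2 := by positivity
  have ha : 0 < 1 - r ^ 2 := by nlinarith
  have hgt : 1 - r ^ 2 < ‖1 - (r : ℂ) ^ 2 * w‖ := by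
    have := norm_sub_norm_le (1 : ℂ) ((r : ℂ) ^ 2 * w)
    rw [norm_one, norm_mul, norm_pow, Complex.norm_real, Real.norm_of_nonneg hr0.le] at this
    nlinarith
  have hw2 : ‖w‖ ^ 2 < 1 := by nlinarith [norm_nonneg w]
  have hpow := rpow_lt_rpow ha.le hgt (by positivity : 0 < 2 * L)
  unfold diskIntegrand
  refine div_nonneg (mul_nonneg (pow_nonneg (by linarith) _) (sq_nonneg _))
    (mul_nonneg (by linarith) (sq_nonneg _))

theorem jacobian_mul_indicator_diskIntegrand_diskPoint (hn : 2 ≤ n) (hL : 0 < L) (hr0 : 0 < r)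
    (hr1 : r < 1) {s : ℝ} (hs : 0 < s) (θ : ℝ) :
    ENNReal.ofReal ((1 - r ^ 2) ^ 2 / ((r ^ 2) ^ 2 * s ^ 3)) *
        {w : ℂ | ‖w‖ < 1}.indicator (fun w => ENNReal.ofReal (diskIntegrand n L r w))
          (diskPoint r s θ) =
      {θ | alphaCos r s < cos θ}.indicator (fun θ => ENNReal.ofReal
        ((1 - r ^ 2) ^ ((n : ℝ) - 2 * L) / r ^ (4 * n) * (s ^ (2 * L - n) / (1 - s ^ (2 * L))) *
          angularIntegrand n r s θ)) θ := by
  by_cases hθ : alphaCos r s < cos θ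
  · have hmem : diskPoint r s θ ∈ {w : ℂ | ‖w‖ < 1} :=
      (norm_diskPoint_lt_one_iff θ hr0 hr1 hs).2 hθ
    have hα : alphaCos r s < 1 := hθ.trans_le (cos_le_one θ)
    have hs1 : s < 1 := ((alphaCos_lt_one_iff hs).1 hα).2
    rw [indicator_of_mem hmem, indicator_of_mem (show θ ∈ {θ | alphaCos r s < cos θ} from hθ),
      ← ENNReal.ofReal_mul (by positivity),
      diskIntegrand_diskPoint hn hL hr0 hr1 ⟨hs, hs1⟩, angularIntegrand,
      cos_alphaAngle (by nlinarith) hs hα.le, mul_assoc]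
  · have hmem : diskPoint r s θ ∉ {w : ℂ | ‖w‖ < 1} :=
      mt (norm_diskPoint_lt_one_iff θ hr0 hr1 hs).1 hθ
    rw [indicator_of_notMem hmem,
      indicator_of_notMem (show θ ∉ {θ | alphaCos r s < cos θ} from hθ), mul_zero]

end

theorem setLIntegral_diskIntegrand {n : ℕ} {L r : ℝ} (hn : 2 ≤ n) (hL : 0 < L) (hr0 : 0 < r)
    (hr1 : r < 1) :
    ∫⁻ w in {w : ℂ | ‖w‖ < 1}, ENNReal.ofReal (diskIntegrand n L r w) =
      ∫⁻ s in Ioo ((1 - r ^ 2) / (1 + r ^ 2)) 1, ENNReal.ofReal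
        (2 * ((1 - r ^ 2) ^ ((n : ℝ) - 2 * L) / r ^ (4 * n)) * radialIntegrand n L r s) := by
  have ha : 0 < 1 - r ^ 2 := by nlinarith
  have hD : MeasurableSet {w : ℂ | ‖w‖ < 1} :=
    measurableSet_lt measurable_norm measurable_const
  have hinner : ∀ s ∈ Ioi (0 : ℝ), ∫⁻ θ in Ioo (-π) π,
      ENNReal.ofReal ((1 - r ^ 2) ^ 2 / ((r ^ 2) ^ 2 * s ^ 3)) *
        {w : ℂ | ‖w‖ < 1}.indicator (fun w => ENNReal.ofReal (diskIntegrand n L r w))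
          (diskPoint r s θ) =
      (Ioo ((1 - r ^ 2) / (1 + r ^ 2)) 1).indicator (fun s => ENNReal.ofReal
        (2 * ((1 - r ^ 2) ^ ((n : ℝ) - 2 * L) / r ^ (4 * n)) * radialIntegrand n L r s)) s := by
    intro s (hs : 0 < s)
    rw [lintegral_congr (jacobian_mul_indicator_diskIntegrand_diskPoint hn hL hr0 hr1 hs)]
    by_cases hs' : s ∈ Ioo ((1 - r ^ 2) / (1 + r ^ 2)) 1
    · have hsL : s ^ (2 * L) < 1 := rpow_lt_one hs.le hs'.2 (by positivity)
      have hP : 0 ≤ s ^ (2 * L - n) / (1 - s ^ (2 * L)) :=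
        div_nonneg (rpow_nonneg hs.le _) (by linarith)
      rw [lintegral_indicator_angularIntegrand hs (by positivity), indicator_of_mem hs',
        radialIntegrand]
      congr 1
      ring
    · have hempty : {θ | alphaCos r s < cos θ} = ∅ :=
        eq_empty_of_forall_notMem fun θ (hθ : alphaCos r s < cos θ) =>
          hs' ((alphaCos_lt_one_iff hs).1 (hθ.trans_le (cos_le_one θ)))
      rw [hempty, indicator_empty, lintegral_zero, indicator_of_notMem hs']
  rw [← lintegral_indicator hD,
    Complex.lintegral_eq_lintegral_inv_polarCoord
      (measurable_diskIntegrand.ennreal_ofReal.indicator hD) 1 ha (pow_ne_zero 2 hr0.ne')]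
  refine (setLIntegral_congr_fun measurableSet_Ioi hinner).trans ?_
  rw [setLIntegral_indicator measurableSet_Ioo,
    inter_eq_left.2 fun s hs => mem_Ioi.2 ((div_pos ha (by positivity)).trans hs.1)]

theorem setIntegral_diskIntegrand {n : ℕ} {L r : ℝ} (hn : 2 ≤ n) (hL : 0 < L) (hr0 : 0 < r)
    (hr1 : r < 1) :
    ∫ w in {w : ℂ | ‖w‖ < 1}, diskIntegrand n L r w =
      ∫ s in Ioo ((1 - r ^ 2) / (1 + r ^ 2)) 1,
        2 * ((1 - r ^ 2) ^ ((n : ℝ) - 2 * L) / r ^ (4 * n)) * radialIntegrand n L r s := by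
  have ha : 0 < 1 - r ^ 2 := by nlinarith
  have hD : MeasurableSet {w : ℂ | ‖w‖ < 1} :=
    measurableSet_lt measurable_norm measurable_const
  rw [integral_eq_lintegral_of_nonneg_ae ((ae_restrict_iff' hD).2 (.of_forall fun w hw =>
      diskIntegrand_nonneg hL hr0 hr1 hw)) measurable_diskIntegrand.aestronglyMeasurable,
    integral_eq_lintegral_of_nonneg_ae ((ae_restrict_iff' measurableSet_Ioo).2
      (.of_forall fun s hs => mul_nonneg (by positivity) (radialIntegrand_nonneg hL
        ⟨(div_pos ha (by positivity)).trans hs.1, hs.2⟩)))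
      (measurable_radialIntegrand.const_mul _).aestronglyMeasurable,
    setLIntegral_diskIntegrand hn hL hr0 hr1]

/-- Lemma 3.1: the disk-integral expression of the variance equals `2(1-r²)^{n-2} K(L,r)`. -/
theorem disk_integral_eq_K
    (n : ℕ) (hn : 2 ≤ n) (L : ℝ) (hL : 0 < L) (r : ℝ) (hr0 : 0 < r) (hr1 : r < 1) :
    r ^ (4 * n) * (1 - r ^ 2) ^ (2 * L - 2) *
      ∫ w in {w : ℂ | ‖w‖ < 1},
        (1 - ‖w‖ ^ 2) ^ (n - 2) * ‖1 - w‖ ^ 2 /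
          ((‖1 - (r : ℂ) ^ 2 * w‖ ^ (2 * L) - (1 - r ^ 2) ^ (2 * L)) *
            ‖1 - (r : ℂ) ^ 2 * w‖ ^ 2)
    = 2 * (1 - r ^ 2) ^ (n - 2) * K n L r := by
  have ha : 0 < 1 - r ^ 2 := by nlinarith
  have hK : ∫ s in Ioo ((1 - r ^ 2) / (1 + r ^ 2)) 1, radialIntegrand n L r s = K n L r := by
    rw [K_eq_intervalIntegral_radialIntegrand, intervalIntegral.integral_of_le
      ((div_le_one (by positivity)).2 (by nlinarith)), integral_Ioc_eq_integral_Ioo]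
  have hexp : (1 - r ^ 2) ^ (2 * L - 2) * (1 - r ^ 2) ^ ((n : ℝ) - 2 * L) =
      (1 - r ^ 2) ^ (n - 2) := by
    rw [← rpow_add ha, ← rpow_natCast _ (n - 2), Nat.cast_sub hn]
    ring_nf
  change r ^ (4 * n) * (1 - r ^ 2) ^ (2 * L - 2) *
    ∫ w in {w : ℂ | ‖w‖ < 1}, diskIntegrand n L r w = _
  rw [setIntegral_diskIntegrand hn hL hr0 hr1, integral_const_mul, hK, ← hexp]
  field_simp
end

section
/- Let n ≥ 1 be an integer and M > n/2 a real number. Then Γ(M+1/2)/Γ(M+1) · Γ(2M−n+2)/Γ(2M+1) + Γ(M−1/2)/Γ(M) · Γ(2M−n)/Γ(2M−1) − 2 · Γ(M+1/2)/Γ(M+1) · Γ(2M−n+1)/Γ(2M) = 2^{−n} · Γ(M − n/2) Γ(M − (n−1)/2)/(Γ(M+1))² · (M + n(n−1)/2). -/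
/-!
Legendre's duplication formula turns every quotient `Γ(2a)/Γ(2b)` into
`2^(2(a-b)) Γ(a)Γ(a+1/2)/(Γ(b)Γ(b+1/2))`. Writing `A = M - n/2`, the three terms become
`2^(-n) Γ(A)Γ(A+1/2)/Γ(M+1)²` times `A(2A+1)`, `2M²` and `2AM` respectively, and
`A(2A+1) + 2M² - 4AM = 2(M-A)² + A = M + n(n-1)/2`.
-/

namespace Real

theorem Gamma_two_mul (s : ℝ) :
    Gamma (2 * s) = 2 ^ (2 * s - 1) / √π * (Gamma s * Gamma (s + 1 / 2)) := by
  have h2 : (2 : ℝ) ^ (1 - 2 * s) * 2 ^ (2 * s - 1) = 1 := by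
    rw [← rpow_add two_pos, sub_add_sub_cancel', sub_self, rpow_zero]
  rw [Gamma_mul_Gamma_add_half]
  field_simp
  linear_combination -Gamma (2 * s) * h2

theorem Gamma_two_mul_div_Gamma_two_mul (a b : ℝ) :
    Gamma (2 * a) / Gamma (2 * b) =
      2 ^ (2 * (a - b)) * (Gamma a * Gamma (a + 1 / 2)) / (Gamma b * Gamma (b + 1 / 2)) := by
  have h2 : (2 : ℝ) ^ (2 * a - 1) / √π = 2 ^ (2 * (a - b)) * (2 ^ (2 * b - 1) / √π) := by
    rw [← mul_div_assoc, ← rpow_add two_pos]; ring_nf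
  have hc : (2 : ℝ) ^ (2 * b - 1) / √π ≠ 0 := by positivity
  rw [Gamma_two_mul, Gamma_two_mul, h2, mul_assoc, mul_div_assoc, mul_div_mul_left _ _ hc,
    mul_div_assoc]
  ring

end Real

open Real

/-- Lemma 4.1: for `M > n/2`,
`Γ(M+1/2)/Γ(M+1) · Γ(2M-n+2)/Γ(2M+1) + Γ(M-1/2)/Γ(M) · Γ(2M-n)/Γ(2M-1)
 - 2 Γ(M+1/2)/Γ(M+1) · Γ(2M-n+1)/Γ(2M)
 = 2⁻ⁿ Γ(M-n/2)Γ(M-(n-1)/2)/Γ(M+1)² · (M + n(n-1)/2)`. -/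
theorem gamma_combination_identity
    (n : ℕ) (hn : 1 ≤ n) (M : ℝ) (hM : (n : ℝ) / 2 < M) :
    Real.Gamma (M + 1 / 2) / Real.Gamma (M + 1) *
          (Real.Gamma (2 * M - n + 2) / Real.Gamma (2 * M + 1)) +
        Real.Gamma (M - 1 / 2) / Real.Gamma M *
          (Real.Gamma (2 * M - n) / Real.Gamma (2 * M - 1)) -
        2 * (Real.Gamma (M + 1 / 2) / Real.Gamma (M + 1) *
          (Real.Gamma (2 * M - n + 1) / Real.Gamma (2 * M)))
      = 2 ^ (-(n : ℝ)) *
          (Real.Gamma (M - (n : ℝ) / 2) * Real.Gamma (M - ((n : ℝ) - 1) / 2) /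
            Real.Gamma (M + 1) ^ 2) *
          (M + n * ((n : ℝ) - 1) / 2) := by
  obtain ⟨A, hA⟩ : ∃ A, M - n / 2 = A := ⟨_, rfl⟩
  have hA_pos : 0 < A := by linarith
  have hM_half : 0 < M - 1 / 2 := by
    have : (1 : ℝ) ≤ n := by exact_mod_cast hn
    linarith
  have hM_pos : 0 < M := by linarith
  have hΓ_sub_half := (Gamma_pos_of_pos hM_half).ne'
  set G := 2 ^ (-(n : ℝ)) * (Gamma A * Gamma (A + 1 / 2) / Gamma (M + 1) ^ 2) with hG
  have first_term :
      Gamma (M + 1 / 2) / Gamma (M + 1) * (Gamma (2 * M - n + 2) / Gamma (2 * M + 1)) =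
        G * (A * (2 * A + 1)) := by
    rw [show 2 * M - n + 2 = 2 * (A + 1) by linear_combination 2 * hA,
      show 2 * M + 1 = 2 * (M + 1 / 2) by ring, Gamma_two_mul_div_Gamma_two_mul,
      show 2 * (A + 1 - (M + 1 / 2)) = -(n : ℝ) + 1 by linear_combination -2 * hA,
      rpow_add_one two_ne_zero, show M + 1 / 2 + 1 / 2 = M + 1 by ring,
      show A + 1 + 1 / 2 = A + 1 / 2 + 1 by ring, Gamma_add_one hA_pos.ne',
      Gamma_add_one (by positivity : A + 1 / 2 ≠ 0), hG, Gamma_add_one hM_pos.ne']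
    field_simp
  have second_term :
      Gamma (M - 1 / 2) / Gamma M * (Gamma (2 * M - n) / Gamma (2 * M - 1)) =
        G * (2 * M ^ 2) := by
    rw [show 2 * M - n = 2 * A by linear_combination 2 * hA,
      show 2 * M - 1 = 2 * (M - 1 / 2) by ring, Gamma_two_mul_div_Gamma_two_mul,
      show 2 * (A - (M - 1 / 2)) = -(n : ℝ) + 1 by linear_combination -2 * hA,
      rpow_add_one two_ne_zero, show M - 1 / 2 + 1 / 2 = M by ring, hG,
      Gamma_add_one hM_pos.ne']
    -- `field_simp` would rewrite `Γ(M - 1/2)` to `Γ((M * 2 - 1) / 2)` and miss `hΓ_sub_half`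
    generalize Gamma (M - 1 / 2) = g at hΓ_sub_half ⊢
    field_simp
  have third_term :
      Gamma (M + 1 / 2) / Gamma (M + 1) * (Gamma (2 * M - n + 1) / Gamma (2 * M)) =
        G * (2 * A * M) := by
    rw [show 2 * M - n + 1 = 2 * (A + 1 / 2) by linear_combination 2 * hA,
      Gamma_two_mul_div_Gamma_two_mul,
      show 2 * (A + 1 / 2 - M) = -(n : ℝ) + 1 by linear_combination -2 * hA,
      rpow_add_one two_ne_zero, show A + 1 / 2 + 1 / 2 = A + 1 by ring, Gamma_add_one hA_pos.ne',
      hG, Gamma_add_one hM_pos.ne']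
    field_simp
  rw [first_term, second_term, third_term, hA,
    show M - ((n : ℝ) - 1) / 2 = A + 1 / 2 by linear_combination hA, ← hG]
  subst hA
  ring
end

section
/- Let n ≥ 2 be an integer and fix 0 < r < 1. For s ∈ [(1−r²)/(1+r²), 1), let A(s) = ∫_0^{α(s,r)} (2cos θ − 2cos α(s,r))^{n−2} (s + 1/s − 2cos θ) dθ. Then lim_{s→1⁻} A(s)/(1−s)^{n−1/2} = ((n−2)! √π/(4 Γ(n+1/2))) · (2r²)^{n−1/2}. -/
/-- The inner angular integral `A(s)` of step 4, Section 3. -/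
noncomputable def innerIntegral (n : ℕ) (r s : ℝ) : ℝ :=
  ∫ θ in (0 : ℝ)..alphaAngle r s,
    (2 * Real.cos θ - 2 * Real.cos (alphaAngle r s)) ^ (n - 2) *
      (s + 1 / s - 2 * Real.cos θ)

open Real Filter Topology intervalIntegral

theorem hasDerivAt_mul_one_sub_sq_pow_succ (m : ℕ) (u : ℝ) :
    HasDerivAt (fun u : ℝ => u * (1 - u ^ 2) ^ (m + 1))
      ((2 * m + 3) * (1 - u ^ 2) ^ (m + 1) - 2 * (m + 1) * (1 - u ^ 2) ^ m) u := by
  have h := (hasDerivAt_id u).fun_mul (((hasDerivAt_pow 2 u).const_sub 1).fun_pow (m + 1))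
  refine h.congr_deriv ?_
  simp only [id, Nat.add_sub_cancel]
  push_cast
  ring

theorem intervalIntegrable_one_sub_sq_pow (m : ℕ) (a b : ℝ) :
    IntervalIntegrable (fun u : ℝ => (1 - u ^ 2) ^ m) MeasureTheory.volume a b :=
  (by fun_prop : Continuous fun u : ℝ => (1 - u ^ 2) ^ m).intervalIntegrable a b

theorem integral_one_sub_sq_pow_succ (m : ℕ) :
    (2 * (m : ℝ) + 3) * ∫ u in (0 : ℝ)..1, (1 - u ^ 2) ^ (m + 1) =
      2 * ((m : ℝ) + 1) * ∫ u in (0 : ℝ)..1, (1 - u ^ 2) ^ m := by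
  have h := integral_eq_sub_of_hasDerivAt (fun u _ => hasDerivAt_mul_one_sub_sq_pow_succ m u)
    (((intervalIntegrable_one_sub_sq_pow _ 0 1).const_mul _).sub
      ((intervalIntegrable_one_sub_sq_pow _ 0 1).const_mul _))
  rw [integral_sub ((intervalIntegrable_one_sub_sq_pow _ 0 1).const_mul _)
    ((intervalIntegrable_one_sub_sq_pow _ 0 1).const_mul _), integral_const_mul,
    integral_const_mul] at h
  norm_num at h
  linarith

theorem integral_one_sub_sq_pow (m : ℕ) :
    ∫ u in (0 : ℝ)..1, (1 - u ^ 2) ^ m = √π * m.factorial / (2 * Gamma (m + 3 / 2)) := by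
  induction m with
  | zero =>
    rw [show ((0 : ℕ) : ℝ) + 3 / 2 = 1 / 2 + 1 by norm_num, Gamma_add_one (by norm_num),
      Gamma_one_half_eq]
    have : √π ≠ 0 := by positivity
    field_simp
    simp
  | succ m ih =>
    have hΓ : Gamma ((m + 1 : ℕ) + 3 / 2) = (m + 3 / 2) * Gamma (m + 3 / 2) := by
      rw [← Gamma_add_one (by positivity)]
      push_cast
      ring_nf
    have hΓpos : 0 < Gamma (m + 3 / 2) := Gamma_pos_of_pos (by positivity)
    have h := integral_one_sub_sq_pow_succ m
    rw [ih] at h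
    rw [hΓ, Nat.factorial_succ]
    field_simp at h ⊢
    push_cast
    linear_combination h

theorem integral_sq_mul_one_sub_sq_pow (m : ℕ) :
    ∫ u in (0 : ℝ)..1, u ^ 2 * (1 - u ^ 2) ^ m = √π * m.factorial / (4 * Gamma (m + 5 / 2)) := by
  have h : ∫ u in (0 : ℝ)..1, u ^ 2 * (1 - u ^ 2) ^ m =
      (∫ u in (0 : ℝ)..1, (1 - u ^ 2) ^ m) - ∫ u in (0 : ℝ)..1, (1 - u ^ 2) ^ (m + 1) := by
    rw [← integral_sub (intervalIntegrable_one_sub_sq_pow _ 0 1)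
      (intervalIntegrable_one_sub_sq_pow _ 0 1)]
    congr 1 with u
    ring
  have hΓ : Gamma (m + 5 / 2) = (m + 3 / 2) * Gamma (m + 3 / 2) := by
    rw [← Gamma_add_one (by positivity)]
    ring_nf
  have hΓ' : Gamma ((m + 1 : ℕ) + 3 / 2) = (m + 3 / 2) * Gamma (m + 3 / 2) := by
    rw [← hΓ]
    push_cast
    ring_nf
  have hΓpos : 0 < Gamma (m + 3 / 2) := Gamma_pos_of_pos (by positivity)
  rw [h, integral_one_sub_sq_pow, integral_one_sub_sq_pow, hΓ, hΓ', Nat.factorial_succ]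
  field_simp
  push_cast
  ring

-- Through `sinc` the identity also holds at `x = 0`, so no limit argument needs `a ≠ 0`.
theorem two_sub_two_mul_cos_eq (x : ℝ) : 2 - 2 * cos x = x ^ 2 * sinc (x / 2) ^ 2 := by
  rcases eq_or_ne x 0 with rfl | hx
  · simp
  · have hcos : cos x = 1 - 2 * sin (x / 2) ^ 2 := by
      have h := cos_two_mul (x / 2)
      rw [mul_div_cancel₀ x two_ne_zero] at h
      linarith [sin_sq_add_cos_sq (x / 2)]
    rw [sinc_of_ne_zero (by simpa using hx), hcos]
    field_simp
    ring

theorem cos_arccos_of_neg_one_le {x : ℝ} (hx : -1 ≤ x) : cos (arccos x) = min x 1 := by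
  rcases le_total x 1 with hx1 | hx1
  · rw [cos_arccos hx hx1, min_eq_left hx1]
  · rw [arccos_eq_zero.2 hx1, cos_zero, min_eq_right hx1]

theorem two_sub_two_mul_cos_mul_le {a u : ℝ} (ha : 0 ≤ a) (haπ : a ≤ π) (hu0 : 0 ≤ u)
    (hu1 : u ≤ 1) : 2 - 2 * cos (a * u) ≤ 2 - 2 * cos a := by
  have := cos_le_cos_of_nonneg_of_le_pi (mul_nonneg ha hu0) haπ (mul_le_of_le_one_right ha hu1)
  linarith

theorem rpow_natCast_add_three_halves {x : ℝ} (hx : 0 ≤ x) (k : ℕ) :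
    x ^ ((k : ℝ) + 3 / 2) = √x * x ^ k * x := by
  rw [show (k : ℝ) + 3 / 2 = ((k + 1 : ℕ) : ℝ) + 1 / 2 by push_cast; ring,
    rpow_add' hx (by positivity), rpow_natCast, ← sqrt_eq_rpow, pow_succ]
  ring

theorem integral_cos_sub_cos_pow_mul_div_rpow_eq (k : ℕ) (a b : ℝ) {ε : ℝ} (hε : 0 < ε) :
    (∫ θ in (0 : ℝ)..a, (2 * cos θ - 2 * cos a) ^ k * (b - 2 * cos θ)) / ε ^ ((k : ℝ) + 3 / 2) =
      ∫ u in (0 : ℝ)..1, a / √ε * ((2 - 2 * cos a) / ε - (2 - 2 * cos (a * u)) / ε) ^ k *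
        ((b - 2) / ε + (2 - 2 * cos (a * u)) / ε) := by
  have hscale := mul_integral_comp_mul_left (a := 0) (b := 1) (c := a)
    (f := fun θ => (2 * cos θ - 2 * cos a) ^ k * (b - 2 * cos θ))
  rw [mul_zero, mul_one] at hscale
  rw [← hscale, rpow_natCast_add_three_halves hε.le, ← integral_const_mul, ← integral_div]
  congr 1 with u
  rw [div_sub_div_same, ← add_div, div_pow]
  have : √ε ≠ 0 := by positivity
  field_simp
  ring

section Asymptotics

variable {ι : Type*} {l : Filter ι} {a ε b : ι → ℝ} {L : ℝ}

theorem tendsto_sq_div_of_tendsto_two_sub_two_cos_div (ha : Tendsto a l (𝓝 0))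
    (hL : Tendsto (fun i => (2 - 2 * cos (a i)) / ε i) l (𝓝 L)) :
    Tendsto (fun i => a i ^ 2 / ε i) l (𝓝 L) := by
  have hsinc : Tendsto (fun i => sinc (a i / 2) ^ 2) l (𝓝 1) := by
    have hc : Continuous fun x : ℝ => sinc (x / 2) ^ 2 := by fun_prop
    simpa [Function.comp_def] using (hc.tendsto 0).comp ha
  have h := hL.div hsinc one_ne_zero
  rw [div_one] at h
  refine h.congr' ?_
  filter_upwards [hsinc.eventually_ne one_ne_zero] with i hi
  have : sinc (a i / 2) ≠ 0 := by simpa using hi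
  rw [Pi.div_apply, two_sub_two_mul_cos_eq]
  field_simp

theorem tendsto_two_sub_two_cos_mul_div (ha : Tendsto a l (𝓝 0))
    (hL : Tendsto (fun i => (2 - 2 * cos (a i)) / ε i) l (𝓝 L)) (u : ℝ) :
    Tendsto (fun i => (2 - 2 * cos (a i * u)) / ε i) l (𝓝 (L * u ^ 2)) := by
  have hsinc : Tendsto (fun i => sinc (a i * u / 2) ^ 2) l (𝓝 1) := by
    have hc : Continuous fun x : ℝ => sinc (x * u / 2) ^ 2 := by fun_prop
    simpa [Function.comp_def] using (hc.tendsto 0).comp ha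
  have h := ((tendsto_sq_div_of_tendsto_two_sub_two_cos_div ha hL).mul_const (u ^ 2)).mul hsinc
  rw [mul_one] at h
  refine h.congr fun i => ?_
  rw [two_sub_two_mul_cos_eq]
  ring

theorem tendsto_integral_cos_sub_cos_pow_mul_div_rpow [l.NeBot] [l.IsCountablyGenerated] (k : ℕ)
    (ha : Tendsto a l (𝓝 0)) (ha0 : ∀ᶠ i in l, 0 ≤ a i) (hε : ∀ᶠ i in l, 0 < ε i)
    (hL : Tendsto (fun i => (2 - 2 * cos (a i)) / ε i) l (𝓝 L))
    (hb : Tendsto (fun i => (b i - 2) / ε i) l (𝓝 0)) :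
    Tendsto (fun i => (∫ θ in (0 : ℝ)..a i, (2 * cos θ - 2 * cos (a i)) ^ k * (b i - 2 * cos θ)) /
      ε i ^ ((k : ℝ) + 3 / 2)) l
      (𝓝 (L ^ ((k : ℝ) + 3 / 2) * ∫ u in (0 : ℝ)..1, u ^ 2 * (1 - u ^ 2) ^ k)) := by
  set q : ι → ℝ → ℝ := fun i u => (2 - 2 * cos (a i * u)) / ε i with hq
  have hq1 : Tendsto (fun i => q i 1) l (𝓝 L) := by simpa [hq] using hL
  have hqu (u : ℝ) : Tendsto (fun i => q i u) l (𝓝 (L * u ^ 2)) :=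
    tendsto_two_sub_two_cos_mul_div ha hL u
  have hL0 : 0 ≤ L := ge_of_tendsto hL <| hε.mono fun i hi =>
    div_nonneg (by linarith [cos_le_one (a i)]) hi.le
  have hscale : Tendsto (fun i => a i / √(ε i)) l (𝓝 √L) := by
    refine ((continuous_sqrt.tendsto L).comp
      (tendsto_sq_div_of_tendsto_two_sub_two_cos_div ha hL)).congr' ?_
    filter_upwards [ha0] with i hi
    rw [Function.comp_apply, sqrt_div (sq_nonneg _), sqrt_sq hi]
  have hlim : ∫ u in (0 : ℝ)..1, √L * (L - L * u ^ 2) ^ k * ((0 : ℝ) + L * u ^ 2) =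
      L ^ ((k : ℝ) + 3 / 2) * ∫ u in (0 : ℝ)..1, u ^ 2 * (1 - u ^ 2) ^ k := by
    rw [rpow_natCast_add_three_halves hL0, ← integral_const_mul]
    congr 1 with u
    rw [show L - L * u ^ 2 = L * (1 - u ^ 2) by ring, mul_pow]
    ring
  rw [← hlim]
  refine Tendsto.congr' ?_ (intervalIntegral.tendsto_integral_filter_of_dominated_convergence
    (F := fun i u => a i / √(ε i) * (q i 1 - q i u) ^ k * ((b i - 2) / ε i + q i u))
    (fun _ => (√L + 1) * (L + 1) ^ k * (L + 2)) ?_ ?_ intervalIntegrable_const ?_)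
  · filter_upwards [hε] with i hi
    rw [integral_cos_sub_cos_pow_mul_div_rpow_eq k _ _ hi]
    simp only [hq, mul_one]
  · exact Eventually.of_forall fun i => Continuous.aestronglyMeasurable (by fun_prop)
  · have hb1 : ∀ᶠ i in l, |(b i - 2) / ε i| ≤ 1 := by
      have h := hb.abs
      rw [abs_zero] at h
      exact h.eventually_le_const zero_lt_one
    filter_upwards [ha0, hε, ha.eventually_le_const pi_pos, hscale.eventually_le_const
      (lt_add_one _), hq1.eventually_le_const (lt_add_one L), hb1] with i ha0 hε haπ hscale hq1 hb1
    refine MeasureTheory.ae_of_all _ fun u hu => ?_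
    rw [Set.uIoc_of_le zero_le_one] at hu
    have hqu0 : 0 ≤ q i u := div_nonneg (by linarith [cos_le_one (a i * u)]) hε.le
    have hqu1 : q i u ≤ q i 1 := by
      simp only [hq, mul_one]
      exact div_le_div_of_nonneg_right (two_sub_two_mul_cos_mul_le ha0 haπ hu.1.le hu.2) hε.le
    have hsum : |(b i - 2) / ε i + q i u| ≤ L + 2 := by
      linarith [abs_add_le ((b i - 2) / ε i) (q i u), abs_of_nonneg hqu0]
    rw [norm_mul, norm_mul, norm_pow, norm_of_nonneg (by positivity),
      norm_of_nonneg (sub_nonneg.2 hqu1), norm_eq_abs]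
    gcongr
    linarith
  · exact MeasureTheory.ae_of_all _ fun u _ =>
      (hscale.mul ((hq1.sub (hqu u)).pow k)).mul (hb.add (hqu u))

end Asymptotics

theorem tendsto_alphaAngle_arg (r : ℝ) :
    Tendsto (fun s => ((1 + r ^ 2) * s + (1 - r ^ 2) / s) / 2) (𝓝 1) (𝓝 1) := by
  have h : ContinuousAt (fun s : ℝ => ((1 + r ^ 2) * s + (1 - r ^ 2) / s) / 2) 1 := by
    fun_prop (disch := norm_num)
  convert h.tendsto using 2
  ring

theorem tendsto_alphaAngle (r : ℝ) : Tendsto (alphaAngle r) (𝓝 1) (𝓝 0) := by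
  rw [← arccos_one]
  exact (continuous_arccos.tendsto 1).comp (tendsto_alphaAngle_arg r)

-- The `max` is `0` exactly when the argument of `arccos` exceeds `1`, where `alphaAngle r s = 0`.
theorem two_sub_two_cos_alphaAngle {r s : ℝ} (hs : s ≠ 0)
    (harg : -1 ≤ ((1 + r ^ 2) * s + (1 - r ^ 2) / s) / 2) :
    2 - 2 * cos (alphaAngle r s) = max ((1 - s) * (1 + r ^ 2 - (1 - r ^ 2) / s)) 0 := by
  have hid : (1 - s) * (1 + r ^ 2 - (1 - r ^ 2) / s) =
      2 - 2 * (((1 + r ^ 2) * s + (1 - r ^ 2) / s) / 2) := by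
    field_simp
    ring
  rw [alphaAngle, cos_arccos_of_neg_one_le harg, hid]
  rcases le_total (((1 + r ^ 2) * s + (1 - r ^ 2) / s) / 2) 1 with h | h
  · rw [min_eq_left h, max_eq_left (by linarith)]
  · rw [min_eq_right h, max_eq_right (by linarith)]
    ring

theorem tendsto_two_sub_two_cos_alphaAngle_div (r : ℝ) :
    Tendsto (fun s => (2 - 2 * cos (alphaAngle r s)) / (1 - s)) (𝓝[<] 1) (𝓝 (2 * r ^ 2)) := by
  have hg : ContinuousAt (fun s : ℝ => max (1 + r ^ 2 - (1 - r ^ 2) / s) 0) 1 := by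
    fun_prop (disch := norm_num)
  have hg1 : max (1 + r ^ 2 - (1 - r ^ 2) / 1) 0 = 2 * r ^ 2 := by
    rw [max_eq_left] <;> nlinarith [sq_nonneg r]
  rw [← hg1]
  refine (hg.tendsto.mono_left nhdsWithin_le_nhds).congr' ?_
  filter_upwards [Ioo_mem_nhdsLT zero_lt_one, eventually_nhdsWithin_of_eventually_nhds
    ((tendsto_alphaAngle_arg r).eventually_const_le (show (-1 : ℝ) < 1 by norm_num))]
    with s ⟨hs0, hs1⟩ harg
  rw [two_sub_two_cos_alphaAngle hs0.ne' harg, ← max_div_div_right (sub_pos.2 hs1).le, zero_div,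
    mul_div_cancel_left₀ _ (sub_ne_zero.2 hs1.ne')]

theorem tendsto_add_one_div_sub_two_div_one_sub :
    Tendsto (fun s : ℝ => (s + 1 / s - 2) / (1 - s)) (𝓝[<] 1) (𝓝 0) := by
  have h : ContinuousAt (fun s : ℝ => (1 - s) / s) 1 := by fun_prop (disch := norm_num)
  have h1 : (1 - 1 : ℝ) / 1 = 0 := by norm_num
  rw [← h1]
  refine (h.tendsto.mono_left nhdsWithin_le_nhds).congr' ?_
  filter_upwards [Ioo_mem_nhdsLT zero_lt_one] with s ⟨hs0, hs1⟩
  have : 1 - s ≠ 0 := sub_ne_zero.2 hs1.ne'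
  field_simp
  ring

theorem inner_integral_asymptotics_general
    (n : ℕ) (hn : 2 ≤ n) (r : ℝ) :
    Filter.Tendsto (fun s : ℝ => innerIntegral n r s / (1 - s) ^ ((n : ℝ) - 1 / 2))
      (nhdsWithin 1 (Set.Iio 1))
      (nhds (Nat.factorial (n - 2) * Real.sqrt Real.pi /
          (4 * Real.Gamma ((n : ℝ) + 1 / 2)) *
        (2 * r ^ 2) ^ ((n : ℝ) - 1 / 2))) := by
  obtain ⟨k, rfl⟩ := Nat.exists_eq_add_of_le' hn
  have h := tendsto_integral_cos_sub_cos_pow_mul_div_rpow k (b := fun s => s + 1 / s)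
    ((tendsto_alphaAngle r).mono_left nhdsWithin_le_nhds)
    (Eventually.of_forall fun s => arccos_nonneg _)
    (eventually_nhdsWithin_of_forall (s := Set.Iio 1) fun s hs => sub_pos.2 hs)
    (tendsto_two_sub_two_cos_alphaAngle_div r) tendsto_add_one_div_sub_two_div_one_sub
  rw [integral_sq_mul_one_sub_sq_pow] at h
  have hexp : ((k + 2 : ℕ) : ℝ) - 1 / 2 = k + 3 / 2 := by push_cast; ring
  have hΓ : ((k + 2 : ℕ) : ℝ) + 1 / 2 = k + 5 / 2 := by push_cast; ring
  rw [hexp, hΓ, Nat.add_sub_cancel]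
  convert h using 2
  · simp only [innerIntegral, Nat.add_sub_cancel]
  · ring

/-- Step 4 of Section 3: as `s → 1⁻`,
`A(s)/(1-s)^{n-1/2} → ((n-2)!√π/(4Γ(n+1/2))) (2r²)^{n-1/2}`. -/
theorem inner_integral_asymptotics
    (n : ℕ) (hn : 2 ≤ n) (r : ℝ) (hr0 : 0 < r) (hr1 : r < 1) :
    Filter.Tendsto (fun s : ℝ => innerIntegral n r s / (1 - s) ^ ((n : ℝ) - 1 / 2))
      (nhdsWithin 1 (Set.Iio 1))
      (nhds (Nat.factorial (n - 2) * Real.sqrt Real.pi /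
          (4 * Real.Gamma ((n : ℝ) + 1 / 2)) *
        (2 * r ^ 2) ^ ((n : ℝ) - 1 / 2))) :=
  inner_integral_asymptotics_general n hn r
end

section
/- Let n ≥ 2 be an integer and 0 < r < 1. There exists a constant C = C(n,r) > 0 such that for every ε ∈ (0,1) and every real L with 2L ≥ n, ∫_{(1−r²)/(1+r²)}^{1−ε} (s^{2L−n}/(1−s^{2L})) · (∫_0^{α(s,r)} (2cos θ − 2cos α(s,r))^{n−2} (s + 1/s − 2cos θ) dθ) ds ≤ C · (1−ε)^{2L−n}/(1 − (1−ε)^{2L}). -/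
/-!
The weight `s ^ (2L-n) / (1 - s ^ (2L))` is increasing in `s ∈ (0,1)`, so on `[a, 1-ε]` it is at
most its value at `1-ε`. The inner `θ`-integral is nonnegative because `cos θ ≥ cos α` on `[0, α]`
and `s + 1/s ≥ 2`, and it is at most `4 ^ (n-2) (3 + 1/a) π` for `a ≤ s ≤ 1`, where
`a = (1-r²)/(1+r²) > 0`. As `[a, 1-ε]` has length less than `1`, this constant works as `C`.
-/

open Real Set

lemma two_le_add_one_div {s : ℝ} (hs : 0 < s) : 2 ≤ s + 1 / s := by
  have h : s * (1 / s) = 1 := mul_one_div_cancel hs.ne'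
  nlinarith [sq_nonneg (s - 1)]

lemma intervalIntegral_le_of_nonneg_of_le_const {f : ℝ → ℝ} {a b M : ℝ} (hM : 0 ≤ M)
    (hab : b - a ≤ 1) (hf0 : ∀ x ∈ uIcc a b, 0 ≤ f x) (hfM : ∀ x ∈ Ioc a b, f x ≤ M) :
    ∫ x in a..b, f x ≤ M := by
  rcases le_total b a with hba | hab'
  · rw [intervalIntegral.integral_symm]
    have : 0 ≤ ∫ x in b..a, f x :=
      intervalIntegral.integral_nonneg hba fun x hx => hf0 x (Icc_subset_uIcc' hx)
    linarith
  · have hnorm : ∀ x ∈ uIoc a b, ‖f x‖ ≤ M := fun x hx => by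
      rw [uIoc_of_le hab'] at hx
      rw [norm_of_nonneg (hf0 x (Ioc_subset_Icc_self.trans Icc_subset_uIcc hx))]
      exact hfM x hx
    calc ∫ x in a..b, f x ≤ ‖∫ x in a..b, f x‖ := le_norm_self _
      _ ≤ M * |b - a| := intervalIntegral.norm_integral_le_of_norm_le_const hnorm
      _ ≤ M := by
        rw [abs_of_nonneg (sub_nonneg.2 hab')]
        exact mul_le_of_le_one_right hM hab

section Weight

variable {s b p q : ℝ}

lemma rpow_div_one_sub_rpow_nonneg (hs0 : 0 ≤ s) (hs1 : s < 1) (hq : 0 < q) :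
    0 ≤ s ^ p / (1 - s ^ q) :=
  div_nonneg (rpow_nonneg hs0 _) (sub_nonneg.2 (rpow_lt_one hs0 hs1 hq).le)

lemma rpow_div_one_sub_rpow_le (hs0 : 0 ≤ s) (hsb : s ≤ b) (hb1 : b < 1) (hp : 0 ≤ p)
    (hq : 0 < q) : s ^ p / (1 - s ^ q) ≤ b ^ p / (1 - b ^ q) := by
  have hb0 : 0 ≤ b := hs0.trans hsb
  apply div_le_div₀ (rpow_nonneg hb0 _) (rpow_le_rpow hs0 hsb hp)
    (sub_pos.2 (rpow_lt_one hb0 hb1 hq))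
  linarith [rpow_le_rpow hs0 hsb hq.le]

end Weight

section Angular

variable {m : ℕ} {α s : ℝ}

lemma angularIntegral_nonneg (hs : 0 < s) (hα0 : 0 ≤ α) (hαπ : α ≤ π) :
    0 ≤ ∫ θ in (0 : ℝ)..α, (2 * cos θ - 2 * cos α) ^ m * (s + 1 / s - 2 * cos θ) := by
  refine intervalIntegral.integral_nonneg hα0 fun θ hθ => mul_nonneg (pow_nonneg ?_ _) ?_
  · linarith [cos_le_cos_of_nonneg_of_le_pi hθ.1 hαπ hθ.2]
  · linarith [two_le_add_one_div hs, cos_le_one θ]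

lemma angularIntegral_le (hs : 0 < s) (hα0 : 0 ≤ α) (hαπ : α ≤ π) :
    ∫ θ in (0 : ℝ)..α, (2 * cos θ - 2 * cos α) ^ m * (s + 1 / s - 2 * cos θ)
      ≤ 4 ^ m * (s + 1 / s + 2) * π := by
  have hbound : ∀ θ ∈ uIoc 0 α,
      ‖(2 * cos θ - 2 * cos α) ^ m * (s + 1 / s - 2 * cos θ)‖ ≤ 4 ^ m * (s + 1 / s + 2) := by
    intro θ _
    rw [norm_mul, norm_pow]
    have h1 : ‖2 * cos θ - 2 * cos α‖ ≤ 4 := by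
      rw [Real.norm_eq_abs, abs_le]
      constructor <;> linarith [cos_le_one θ, neg_one_le_cos θ, cos_le_one α, neg_one_le_cos α]
    have h2 : ‖s + 1 / s - 2 * cos θ‖ ≤ s + 1 / s + 2 := by
      rw [Real.norm_eq_abs, abs_le]
      constructor <;> linarith [cos_le_one θ, neg_one_le_cos θ, two_le_add_one_div hs]
    exact mul_le_mul (pow_le_pow_left₀ (norm_nonneg _) h1 _) h2 (norm_nonneg _) (by positivity)
  calc _ ≤ ‖∫ θ in (0 : ℝ)..α, (2 * cos θ - 2 * cos α) ^ m * (s + 1 / s - 2 * cos θ)‖ :=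
        le_norm_self _
    _ ≤ 4 ^ m * (s + 1 / s + 2) * |α - 0| :=
        intervalIntegral.norm_integral_le_of_norm_le_const hbound
    _ ≤ 4 ^ m * (s + 1 / s + 2) * π := by
        rw [sub_zero, abs_of_nonneg hα0]
        gcongr

end Angular

lemma one_sub_sq_div_one_add_sq_mem_Ioo {r : ℝ} (hr0 : 0 < r) (hr1 : r < 1) :
    (1 - r ^ 2) / (1 + r ^ 2) ∈ Ioo 0 1 :=
  ⟨div_pos (by nlinarith) (by positivity), (div_lt_one (by positivity)).2 (by nlinarith)⟩

/-- Step 1 of Section 3: the part of `K(L,r)` with `s ≤ 1-ε` is at most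
`C (1-ε)^{2L-n}/(1-(1-ε)^{2L})`, hence decays exponentially in `L`. -/
theorem K_tail_estimate
    (n : ℕ) (hn : 2 ≤ n) (r : ℝ) (hr0 : 0 < r) (hr1 : r < 1) :
    ∃ C : ℝ, 0 < C ∧
      ∀ ε ∈ Set.Ioo (0 : ℝ) 1, ∀ L : ℝ, (n : ℝ) ≤ 2 * L →
        (∫ s in ((1 - r ^ 2) / (1 + r ^ 2))..(1 - ε),
            s ^ (2 * L - n) / (1 - s ^ (2 * L)) *
              ∫ θ in (0 : ℝ)..alphaAngle r s,
                (2 * Real.cos θ - 2 * Real.cos (alphaAngle r s)) ^ (n - 2) *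
                  (s + 1 / s - 2 * Real.cos θ))
          ≤ C * (1 - ε) ^ (2 * L - n) / (1 - (1 - ε) ^ (2 * L)) := by
  obtain ⟨ha0, ha1⟩ := one_sub_sq_div_one_add_sq_mem_Ioo hr0 hr1
  set a := (1 - r ^ 2) / (1 + r ^ 2)
  refine ⟨4 ^ (n - 2) * (3 + 1 / a) * π, by positivity, fun ε ⟨hε0, hε1⟩ L hL => ?_⟩
  have hq : 0 < 2 * L := by linarith [show (2 : ℝ) ≤ n by exact_mod_cast hn]
  have hp : 0 ≤ 2 * L - n := by linarith
  have hb1 : 1 - ε < 1 := by linarith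
  rw [mul_div_assoc]
  refine intervalIntegral_le_of_nonneg_of_le_const
    (mul_nonneg (by positivity) (rpow_div_one_sub_rpow_nonneg (by linarith) hb1 hq))
    (by linarith) (fun s hs => ?_) (fun s hs => ?_)
  · have hs0 : 0 < s := lt_of_lt_of_le (lt_min ha0 (by linarith)) hs.1
    have hs1 : s < 1 := hs.2.trans_lt (max_lt ha1 hb1)
    exact mul_nonneg (rpow_div_one_sub_rpow_nonneg hs0.le hs1 hq)
      (angularIntegral_nonneg hs0 (arccos_nonneg _) (arccos_le_pi _))
  · have hs0 : 0 < s := ha0.trans hs.1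
    rw [mul_comm (4 ^ (n - 2) * _ * π)]
    refine mul_le_mul (rpow_div_one_sub_rpow_le hs0.le hs.2 hb1 hp hq) ?_
      (angularIntegral_nonneg hs0 (arccos_nonneg _) (arccos_le_pi _))
      (rpow_div_one_sub_rpow_nonneg (by linarith) hb1 hq)
    refine (angularIntegral_le hs0 (arccos_nonneg _) (arccos_le_pi _)).trans ?_
    have : 1 / s ≤ 1 / a := one_div_le_one_div_of_le ha0 hs.1.le
    gcongr 4 ^ (n - 2) * ?_ * π
    linarith [hs.2]
end
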